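/- arXiv:2406.06317 — 2 statements merged into one kernel-verified Lean document; each statement's English description precedes it below -/
import Mathlib

section
/- Let T be a rooted tree, v a vertex of T, and i an integer with 0 ≤ i ≤ d_{T,v}+1, where d_{T,v} is the distance from the root to v. If x is a new vertex not in T, then eliminating x from the insertion tree T(i,x,v) recovers T; that is, p(T(i,x,v), x) = T. -/
open scoped Classical

universe u

variable {V : Type u}

/-- A rooted tree structure on a support set: data only, well-formedness is `RTree.WF`. -/
structure RTree (V : Type u) where
  supp : Set V
  root : V
  parent : V → Option V

namespace RTree

def parentRel (T : RTree V) (a b : V) : Prop := T.parent a = some b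

/-- `u` is an ancestor of `v` in `T` (reflexively). -/
def isAncestor (T : RTree V) (u v : V) : Prop :=
  Relation.ReflTransGen T.parentRel v u

def WF (T : RTree V) : Prop :=
  T.root ∈ T.supp ∧
  T.parent T.root = none ∧
  (∀ v, v ∉ T.supp → T.parent v = none) ∧
  (∀ v ∈ T.supp, v ≠ T.root → ∃ u ∈ T.supp, T.parent v = some u) ∧
  (∀ v ∈ T.supp, T.isAncestor T.root v)

/-- The vertex set of the subtree `T|c` rooted at `c`. -/
def descendants (T : RTree V) (c : V) : Set V :=
  {v | v ∈ T.supp ∧ T.isAncestor c v}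

/-- Iterated parent. -/
def pIter (T : RTree V) : ℕ → V → Option V
  | 0, w => some w
  | n + 1, w => (T.parent w).bind (T.pIter n)

/-- The depth `d_{T,v}` of `v` in `T` (distance to the root). -/
noncomputable def depthOf (T : RTree V) (v : V) : ℕ :=
  sInf {n | T.pIter n v = some T.root}

/-- The subtree of `T` rooted at `c`. -/
noncomputable def subtreeAt (T : RTree V) (c : V) : RTree V where
  supp := T.descendants c
  root := c
  parent := fun w => if w = c then none else if w ∈ T.descendants c then T.parent w else none

/-- The vertex at depth `i` on the path from the root to `v`. -/
noncomputable def ancAt (T : RTree V) (v : V) (i : ℕ) : V :=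
  (T.pIter (T.depthOf v - i) v).getD T.root

/-- Insertion `T(i,x,v)` of a new vertex `x` at depth `i` along the root-to-`v` path:
`i = 0` makes `x` the new root, `i = d_{T,v}+1` adds `x` as a new child of `v`, and
for `1 ≤ i ≤ d_{T,v}` the `i`-th edge of the root-to-`v` path is subdivided by `x`. -/
noncomputable def insertAt (T : RTree V) (i : ℕ) (x v : V) : RTree V :=
  if i = 0 then
    { supp := insert x T.supp
      root := x
      parent := fun w => if w = x then none else if w = T.root then some x else T.parent w }
  else if i = T.depthOf v + 1 then
    { supp := insert x T.supp
      root := T.root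
      parent := fun w => if w = x then some v else T.parent w }
  else
    { supp := insert x T.supp
      root := T.root
      parent := fun w =>
        if w = x then some (T.ancAt v (i - 1))
        else if w = T.ancAt v i then some x
        else T.parent w }

/-- Elimination `p(T,x)` of a vertex `x` (meaningful when `x` has at most one child). -/
noncomputable def elim (T : RTree V) (x : V) : RTree V where
  supp := T.supp \ {x}
  root :=
    if T.root = x then (if h : ∃ w, T.parent w = some x then h.choose else T.root) else T.root
  parent := fun w =>
    if w = x then none
    else if T.parent w = some x then T.parent x
    else T.parent w

end RTree

/-- Reachability inside the vertex set `s`, i.e. in the induced subgraph `G[s]`. -/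
def reachWithin (G : SimpleGraph V) (s : Set V) : V → V → Prop :=
  Relation.ReflTransGen (fun a b => a ∈ s ∧ b ∈ s ∧ G.Adj a b)

/-- Recursive definition of a search tree: the children of the root are the roots of
search trees on the connected components of the graph minus the root. -/
inductive IsSearchTreeRec {V : Type u} (G : SimpleGraph V) : RTree V → Prop
  | intro (T : RTree V) (hwf : T.WF)
      (hconn : ∀ a ∈ T.supp, ∀ b ∈ T.supp, reachWithin G T.supp a b)
      (hcomp : ∀ c, T.parent c = some T.root →
        ∀ w, w ∈ T.descendants c ↔
          (w ∈ T.supp ∧ w ≠ T.root ∧ reachWithin G (T.supp \ {T.root}) c w))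
      (hrec : ∀ c, T.parent c = some T.root → IsSearchTreeRec G (T.subtreeAt c)) :
      IsSearchTreeRec G T

/-- `T` is a search tree on the induced subgraph `G[s]`. -/
def IsSearchTreeOn (G : SimpleGraph V) (s : Set V) (T : RTree V) : Prop :=
  T.supp = s ∧ IsSearchTreeRec G T

/-- `T` is a search tree on `G`. -/
def IsSearchTree (G : SimpleGraph V) (T : RTree V) : Prop :=
  IsSearchTreeOn G Set.univ T

/-- The `uv`-rotation of `T` (for `v` a child of `u`): `u` becomes a child of `v`, `v` takes
`u`'s old parent, and each subtree `S` of `v` is reattached below `u` iff `u` has a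
`G`-neighbour in `S`. -/
noncomputable def rotate (G : SimpleGraph V) (T : RTree V) (u v : V) : RTree V where
  supp := T.supp
  root := if T.root = u then v else T.root
  parent := fun w =>
    if w = v then T.parent u
    else if w = u then some v
    else if T.parent w = some v then
      (if ∃ z ∈ T.descendants w, G.Adj u z then some u else some v)
    else T.parent w

def IsRotation (G : SimpleGraph V) (S S' : RTree V) : Prop :=
  ∃ u v, S.parent v = some u ∧ S' = rotate G S u v

def rotAdj (G : SimpleGraph V) (S S' : RTree V) : Prop :=
  S ≠ S' ∧ (IsRotation G S S' ∨ IsRotation G S' S)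

/-- The rotation graph of the induced subgraph `G[s]`: vertices are the search trees on
`G[s]`, two trees being adjacent iff they differ by a single rotation. -/
def rotationGraphOn (G : SimpleGraph V) (s : Set V) :
    SimpleGraph {T : RTree V // IsSearchTreeOn G s T} where
  Adj T T' := rotAdj G T.1 T'.1
  symm := ⟨fun T T' h => ⟨Ne.symm h.1, Or.symm h.2⟩⟩
  loopless := ⟨fun T h => h.1 rfl⟩

/-- A vertex of `K` of maximal depth in `T` (the vertex `v_{λ(T)}`). -/
noncomputable def deepestIn (T : RTree V) (K : Set V) : V :=
  if h : ∃ u, u ∈ K ∧ ∀ w ∈ K, T.depthOf w ≤ T.depthOf u then h.choose else T.root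

/-- `u` and `v` have different relative order in `T` and `T'`. -/
def diffRelOrder (T T' : RTree V) (u v : V) : Prop :=
  (T.isAncestor u v ∧ ¬ T'.isAncestor u v) ∨ (¬ T.isAncestor u v ∧ T'.isAncestor u v)

/-- The step from `S` to `S'` is a rotation of the pair `u`, `v`. -/
def isUVStep (G : SimpleGraph V) (u v : V) (S S' : RTree V) : Prop :=
  (S.parent v = some u ∧ S' = rotate G S u v) ∨ (S.parent u = some v ∧ S' = rotate G S v u)

/-- A threshold graph: obtainable from the one-vertex graph by repeatedly adding either an
isolated vertex or a universal vertex. -/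
def IsThresholdGraph {V : Type u} [Fintype V] (G : SimpleGraph V) : Prop :=
  ∃ e : Fin (Fintype.card V) ≃ V,
    ∀ i : Fin (Fintype.card V),
      (∀ j, j < i → ¬ G.Adj (e i) (e j)) ∨ (∀ j, j < i → G.Adj (e i) (e j))

/-- The complete split graph `SPK_{p,q}`: a clique of size `p` completely joined to an
independent set of size `q`. -/
def completeSplitGraph (p q : ℕ) : SimpleGraph (Fin p ⊕ Fin q) where
  Adj a b := a ≠ b ∧ (a.isLeft = true ∨ b.isLeft = true)
  symm := ⟨fun a b h => ⟨Ne.symm h.1, Or.symm h.2⟩⟩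
  loopless := ⟨fun a h => h.1 rfl⟩

/-
In each shape of `T(i,x,v)` the new vertex `x` has at most one child `c`, and the parent of `x`
is the old parent of `c`: for `i = 0`, `c` is the old root and `x` has no parent; for
`i = d_{T,v} + 1`, `x` is a leaf; for `1 ≤ i ≤ d_{T,v}`, `c` is the vertex at depth `i` on the
root-to-`v` path, whose parent in `T` is the vertex at depth `i - 1`. Eliminating `x` thus hands
`c` its old parent back and leaves every other parent pointer untouched.
-/

namespace RTree

attribute [ext] RTree

variable {T : RTree V} {x v : V} {i : ℕ}

lemma pIter_add (m n : ℕ) (w : V) :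
    T.pIter (m + n) w = (T.pIter m w).bind (T.pIter n) := by
  induction m generalizing w with
  | zero => simp [pIter]
  | succ m ih =>
    rw [Nat.succ_add]
    cases hw : T.parent w <;> simp [pIter, hw, ih]

lemma pIter_one (w : V) : T.pIter 1 w = T.parent w := by
  cases hw : T.parent w <;> simp [pIter, hw]

lemma exists_pIter_of_pIter_add_eq_some {m n : ℕ} {w r : V}
    (h : T.pIter (m + n) w = some r) : ∃ a, T.pIter m w = some a ∧ T.pIter n a = some r := by
  rwa [pIter_add, Option.bind_eq_some_iff] at h

-- When no iterated parent of `v` is the root, `depthOf v` is the junk value `sInf ∅ = 0`.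
lemma pIter_depthOf_of_pos (h : 0 < T.depthOf v) : T.pIter (T.depthOf v) v = some T.root :=
  Nat.sInf_mem (Nat.nonempty_of_pos_sInf h)

lemma parent_ancAt (h0 : 0 < i) (hi : i ≤ T.depthOf v) :
    T.parent (T.ancAt v i) = some (T.ancAt v (i - 1)) := by
  have hroot : T.pIter (T.depthOf v - i + (1 + (i - 1))) v = some T.root := by
    rw [show T.depthOf v - i + (1 + (i - 1)) = T.depthOf v by omega]
    exact pIter_depthOf_of_pos (by omega)
  obtain ⟨a, hva, har⟩ := exists_pIter_of_pIter_add_eq_some hroot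
  obtain ⟨b, hab, -⟩ := exists_pIter_of_pIter_add_eq_some har
  rw [pIter_one] at hab
  have hvi : T.ancAt v i = a := by simp [ancAt, hva]
  have hvi' : T.ancAt v (i - 1) = b := by
    rw [ancAt, show T.depthOf v - (i - 1) = T.depthOf v - i + 1 by omega, pIter_add, hva]
    simp [pIter_one, hab]
  rw [hvi, hvi', hab]

lemma elim_root_of_parent_eq_some_iff {c : V} (hr : T.root = x)
    (hc : ∀ w, T.parent w = some x ↔ w = c) : (T.elim x).root = c := by
  have hex : ∃ w, T.parent w = some x := ⟨c, (hc c).2 rfl⟩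
  simp only [elim, if_pos hr, dif_pos hex]
  exact (hc _).1 hex.choose_spec

section elim

variable (hT : T.WF) (hx : x ∉ T.supp)
include hT hx

lemma ne_root_of_notMem : x ≠ T.root := by
  rintro rfl
  exact hx hT.1

lemma parent_ne_some_of_notMem (w : V) : T.parent w ≠ some x := by
  intro hw
  by_cases hws : w ∈ T.supp
  · have hwr : w ≠ T.root := by rintro rfl; simp [hT.2.1] at hw
    obtain ⟨u, hu, hwu⟩ := hT.2.2.2.1 w hws hwr
    rw [hw, Option.some_inj] at hwu
    exact hx (hwu ▸ hu)
  · simp [hT.2.2.1 w hws] at hw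

lemma elim_insertAt_zero : (T.insertAt 0 x v).elim x = T := by
  have hxr := ne_root_of_notMem hT hx
  ext w
  · simp [insertAt, elim, hx]
  · refine elim_root_of_parent_eq_some_iff (by simp [insertAt]) fun u => ?_
    by_cases hux : u = x
    · simp [insertAt, hux, hxr]
    by_cases hur : u = T.root
    · simp [insertAt, hur, hxr.symm]
    · simp [insertAt, hux, hur, parent_ne_some_of_notMem hT hx u]
  · by_cases hwx : w = x
    · simp [insertAt, elim, hwx, hT.2.2.1 x hx]
    by_cases hwr : w = T.root
    · simp [insertAt, elim, hwr, hxr.symm, hT.2.1]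
    · simp [insertAt, elim, hwx, hwr, parent_ne_some_of_notMem hT hx w]

lemma elim_insertAt_depthOf_add_one : (T.insertAt (T.depthOf v + 1) x v).elim x = T := by
  have hxr := ne_root_of_notMem hT hx
  ext w
  · simp [insertAt, elim, hx]
  · simp [insertAt, elim, hxr.symm]
  · by_cases hwx : w = x
    · simp [insertAt, elim, hwx, hT.2.2.1 x hx]
    · simp [insertAt, elim, hwx, parent_ne_some_of_notMem hT hx w]

lemma elim_insertAt_of_pos_of_le (h0 : 0 < i) (hi : i ≤ T.depthOf v) :
    (T.insertAt i x v).elim x = T := by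
  have hxr := ne_root_of_notMem hT hx
  have hins : T.insertAt i x v = ⟨insert x T.supp, T.root, fun w =>
      if w = x then some (T.ancAt v (i - 1)) else if w = T.ancAt v i then some x
      else T.parent w⟩ := by
    simp [insertAt, h0.ne', show i ≠ T.depthOf v + 1 by omega]
  have hpar := parent_ancAt h0 hi
  have hax : T.ancAt v i ≠ x := by
    intro h
    rw [h] at hpar
    simp [hT.2.2.1 x hx] at hpar
  rw [hins]
  ext w
  · simp [elim, hx]
  · simp [elim, hxr.symm]
  · by_cases hwx : w = x
    · simp [elim, hwx, hT.2.2.1 x hx]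
    by_cases hwa : w = T.ancAt v i
    · simp [elim, hwa, hax, hpar]
    · simp [elim, hwx, hwa, parent_ne_some_of_notMem hT hx w]

end elim

end RTree

theorem elim_insertAt_general {V : Type u} (T : RTree V) (hT : T.WF) (v : V)
    (x : V) (hx : x ∉ T.supp) (i : ℕ) (hi : i ≤ T.depthOf v + 1) :
    (T.insertAt i x v).elim x = T := by
  rcases Nat.eq_zero_or_pos i with rfl | h0
  · exact RTree.elim_insertAt_zero hT hx
  rcases Nat.lt_or_eq_of_le hi with hlt | rfl
  · exact RTree.elim_insertAt_of_pos_of_le hT hx h0 (Nat.le_of_lt_succ hlt)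
  · exact RTree.elim_insertAt_depthOf_add_one hT hx

/-- eliminating `x` from the insertion tree `T(i,x,v)` recovers `T`. -/
theorem elim_insertAt {V : Type u} (T : RTree V) (hT : T.WF) (v : V) (hv : v ∈ T.supp)
    (x : V) (hx : x ∉ T.supp) (i : ℕ) (hi : i ≤ T.depthOf v + 1) :
    (T.insertAt i x v).elim x = T :=
  elim_insertAt_general T hT v x hx i hi
end

section
/- Let G be a connected graph and T a rooted tree with vertex set V(G). Then T is a search tree on G if and only if for every non-root vertex v of T, the vertex set of the subtree T|v rooted at v induces a connected component of the graph obtained from G by deleting all vertices whose depth in T is strictly less than the depth of v. -/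
open scoped Classical

universe u

variable {V : Type u}

/-!
Both conditions unfold along the same recursion. At a child `c` of the root the vertices of
depth at least `d(c) = 1` are those of `G - root`, so there the condition says exactly that
`T|c` is a component of `G - root`. Such a component has no edges to the other vertices of
`G - root`; hence for `v` below `c`, the component of `v` among the vertices of depth at least
`d(v)` is the same whether computed in `T` or in `T|c`, whose depths are those of `T` shifted
by `d(c)`. Induction on the search tree gives one direction, induction on the number of
vertices the other.
-/

section reachWithin

variable {G : SimpleGraph V} {s t : Set V} {a b : V}

theorem reachWithin_mono (hst : s ⊆ t) (h : reachWithin G s a b) : reachWithin G t a b :=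
  Relation.ReflTransGen.mono (fun _ _ h => ⟨hst h.1, hst h.2.1, h.2.2⟩) _ _ h

theorem reachWithin_symm (h : reachWithin G s a b) : reachWithin G s b a := by
  induction h with
  | refl => exact .refl
  | tail _ hxy ih => exact .head ⟨hxy.2.1, hxy.1, hxy.2.2.symm⟩ ih

theorem reachWithin_univ_of_reachable (h : G.Reachable a b) : reachWithin G Set.univ a b :=
  Relation.ReflTransGen.mono (fun _ _ h => ⟨trivial, trivial, h⟩) _ _
    ((SimpleGraph.reachable_iff_reflTransGen a b).1 h)

theorem reachWithin_inter_of_closed (hcl : ∀ x y, x ∈ t → y ∈ s → G.Adj x y → y ∈ t)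
    (ha : a ∈ t) (h : reachWithin G s a b) : b ∈ t ∧ reachWithin G (s ∩ t) a b := by
  induction h with
  | refl => exact ⟨ha, .refl⟩
  | @tail x y _ hxy ih =>
    have hy := hcl x y ih.1 hxy.2.1 hxy.2.2
    exact ⟨hy, ih.2.tail ⟨⟨hxy.1, ih.1⟩, ⟨hxy.2.1, hy⟩, hxy.2.2⟩⟩

end reachWithin

namespace RTree

variable {T : RTree V} {G : SimpleGraph V} {c u v w x y : V}

theorem WF.mem_supp_of_parent_eq (hwf : T.WF) (h : T.parent v = some u) :
    v ∈ T.supp ∧ u ∈ T.supp ∧ v ≠ T.root := by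
  have hv : v ∈ T.supp := by
    by_contra hv
    simp [hwf.2.2.1 v hv] at h
  have hvr : v ≠ T.root := by
    rintro rfl
    simp [hwf.2.1] at h
  obtain ⟨u', hu', hvu'⟩ := hwf.2.2.2.1 v hv hvr
  rw [hvu', Option.some_inj] at h
  exact ⟨hv, h ▸ hu', hvr⟩

theorem exists_pIter_of_isAncestor (h : T.isAncestor u v) : ∃ n, T.pIter n v = some u := by
  induction h using Relation.ReflTransGen.head_induction_on with
  | refl => exact ⟨0, rfl⟩
  | head hab _ ih =>
    obtain ⟨n, hn⟩ := ih
    exact ⟨n + 1, by simp [pIter, show T.parent _ = _ from hab, hn]⟩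

theorem depthOf_root : T.depthOf T.root = 0 :=
  Nat.eq_zero_of_le_zero (Nat.sInf_le rfl)

theorem WF.depthOf_parent (hwf : T.WF) (h : T.parent v = some u) :
    T.depthOf v = T.depthOf u + 1 := by
  obtain ⟨hv, hu, hvr⟩ := hwf.mem_supp_of_parent_eq h
  have hshift : {n | T.pIter (n + 1) v = some T.root} = {n | T.pIter n u = some T.root} := by
    ext n
    simp [pIter, h]
  have hu' : {n | T.pIter n u = some T.root}.Nonempty :=
    exists_pIter_of_isAncestor (hwf.2.2.2.2 u hu)
  have hv' : {n | T.pIter n v = some T.root}.Nonempty :=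
    exists_pIter_of_isAncestor (hwf.2.2.2.2 v hv)
  rw [← hshift] at hu'
  rw [depthOf, depthOf, ← hshift, Nat.sInf_def hv', Nat.sInf_def hu']
  exact @Nat.find_comp_succ _ (fun _ => Classical.propDecidable _) _ _
    (by simpa [pIter] using hvr)

theorem WF.one_le_depthOf (hwf : T.WF) (hv : v ∈ T.supp) (hvr : v ≠ T.root) :
    1 ≤ T.depthOf v := by
  obtain ⟨u, -, hu⟩ := hwf.2.2.2.1 v hv hvr
  rw [hwf.depthOf_parent hu]
  omega

theorem WF.depthOf_lt_of_isAncestor (hwf : T.WF) (h : T.isAncestor u v) (hvu : v ≠ u) :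
    T.depthOf u < T.depthOf v := by
  induction h using Relation.ReflTransGen.head_induction_on with
  | refl => exact absurd rfl hvu
  | @head a b hab _ ih =>
    rw [hwf.depthOf_parent hab]
    rcases eq_or_ne b u with rfl | hbu
    · omega
    · have := ih hbu
      omega

theorem WF.isAncestor_antisymm (hwf : T.WF) (huv : T.isAncestor u v) (hvu : T.isAncestor v u) :
    u = v := by
  by_contra huv'
  have := hwf.depthOf_lt_of_isAncestor huv (Ne.symm huv')
  have := hwf.depthOf_lt_of_isAncestor hvu huv'
  omega

theorem WF.root_notMem_descendants (hwf : T.WF) (hc : c ≠ T.root) :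
    T.root ∉ T.descendants c := by
  rintro ⟨-, h⟩
  rcases Relation.ReflTransGen.cases_head h with h | ⟨b, hb, -⟩
  · exact hc h.symm
  · simp [parentRel, hwf.2.1] at hb

theorem WF.exists_parent_eq_root_mem_descendants (hwf : T.WF) (hv : v ∈ T.supp)
    (hvr : v ≠ T.root) : ∃ c, T.parent c = some T.root ∧ v ∈ T.descendants c := by
  suffices ∀ a, T.isAncestor T.root a → a ∈ T.supp → a ≠ T.root →
      ∃ c, T.parent c = some T.root ∧ a ∈ T.descendants c from
    this v (hwf.2.2.2.2 v hv) hv hvr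
  intro a ha
  induction ha using Relation.ReflTransGen.head_induction_on with
  | refl => exact fun _ h => absurd rfl h
  | @head a b hab hb ih =>
    intro ha _
    rcases eq_or_ne b T.root with rfl | hbr
    · exact ⟨a, hab, ha, .refl⟩
    · obtain ⟨c, hc, hbc⟩ := ih (hwf.mem_supp_of_parent_eq hab).2.1 hbr
      exact ⟨c, hc, ha, .head hab hbc.2⟩

theorem WF.exists_parent_mem_descendants (hwf : T.WF) (hw : w ∈ T.descendants c) (hwc : w ≠ c) :
    ∃ u, T.parent w = some u ∧ u ∈ T.descendants c := by
  rcases Relation.ReflTransGen.cases_head hw.2 with h | ⟨u, hu, huc⟩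
  · exact absurd h hwc
  · exact ⟨u, hu, (hwf.mem_supp_of_parent_eq hu).2.1, huc⟩

theorem subtreeAt_parent_of_mem (hw : w ∈ T.descendants c) (hwc : w ≠ c) :
    (T.subtreeAt c).parent w = T.parent w := by
  simp [subtreeAt, hwc, hw]

theorem isAncestor_of_isAncestor_subtreeAt (h : (T.subtreeAt c).isAncestor u v) :
    T.isAncestor u v := by
  refine Relation.ReflTransGen.mono (fun a b hab => ?_) _ _ h
  simp only [parentRel, subtreeAt] at hab ⊢
  split_ifs at hab
  exact hab

theorem WF.isAncestor_subtreeAt (hwf : T.WF) (hv : v ∈ T.descendants c) (hw : w ∈ T.supp)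
    (h : T.isAncestor v w) : (T.subtreeAt c).isAncestor v w := by
  induction h using Relation.ReflTransGen.head_induction_on with
  | refl => exact .refl
  | @head a b hab hbv ih =>
    rcases eq_or_ne a v with rfl | hav
    · exact .refl
    have hac : a ≠ c := fun hac =>
      hav (by subst hac; exact hwf.isAncestor_antisymm hv.2 (.head hab hbv))
    have haD : a ∈ T.descendants c := ⟨hw, (Relation.ReflTransGen.head hab hbv).trans hv.2⟩
    have hab' : (T.subtreeAt c).parentRel a b := (subtreeAt_parent_of_mem haD hac).trans hab
    exact .head hab' (ih (hwf.mem_supp_of_parent_eq hab).2.1)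

theorem WF.subtreeAt (hwf : T.WF) (hc : c ∈ T.supp) : (T.subtreeAt c).WF := by
  have hcD : c ∈ T.descendants c := ⟨hc, .refl⟩
  refine ⟨hcD, by simp [RTree.subtreeAt], fun v hv => ?_, fun v hv hvc => ?_,
    fun v hv => hwf.isAncestor_subtreeAt hcD hv.1 hv.2⟩
  · have hvc : v ≠ c := fun h => hv (h ▸ hcD)
    simp [RTree.subtreeAt, hvc, show v ∉ T.descendants c from hv]
  · obtain ⟨u, hu, huD⟩ := hwf.exists_parent_mem_descendants hv hvc
    exact ⟨u, huD, (subtreeAt_parent_of_mem hv hvc).trans hu⟩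

theorem WF.descendants_subtreeAt (hwf : T.WF) (hv : v ∈ T.descendants c) :
    (T.subtreeAt c).descendants v = T.descendants v := by
  ext w
  exact ⟨fun ⟨hw, h⟩ => ⟨hw.1, isAncestor_of_isAncestor_subtreeAt h⟩,
    fun ⟨hw, h⟩ => ⟨⟨hw, h.trans hv.2⟩, hwf.isAncestor_subtreeAt hv hw h⟩⟩

theorem WF.depthOf_subtreeAt_add (hwf : T.WF) (hc : c ∈ T.supp) (hw : w ∈ T.descendants c) :
    (T.subtreeAt c).depthOf w + T.depthOf c = T.depthOf w := by
  obtain ⟨hws, hwc⟩ := hw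
  induction hwc using Relation.ReflTransGen.head_induction_on with
  | refl =>
    have : (T.subtreeAt c).depthOf c = 0 := depthOf_root
    omega
  | @head a b hab hbc ih =>
    rcases eq_or_ne a c with rfl | hac
    · have : (T.subtreeAt a).depthOf a = 0 := depthOf_root
      omega
    have haD : a ∈ T.descendants c := ⟨hws, .head hab hbc⟩
    have := hwf.depthOf_parent hab
    have := (hwf.subtreeAt hc).depthOf_parent ((subtreeAt_parent_of_mem haD hac).trans hab)
    have := ih (hwf.mem_supp_of_parent_eq hab).2.1
    omega

def levelsFrom (T : RTree V) (d : ℕ) : Set V :=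
  {z | z ∈ T.supp ∧ d ≤ T.depthOf z}

theorem levelsFrom_anti {d d' : ℕ} (h : d ≤ d') : T.levelsFrom d' ⊆ T.levelsFrom d :=
  fun _ hz => ⟨hz.1, h.trans hz.2⟩

theorem WF.levelsFrom_one (hwf : T.WF) : T.levelsFrom 1 = T.supp \ {T.root} := by
  ext z
  refine ⟨fun ⟨hz, hd⟩ => ⟨hz, ?_⟩, fun ⟨hz, hzr⟩ => ⟨hz, hwf.one_le_depthOf hz hzr⟩⟩
  rintro rfl
  simp [depthOf_root] at hd

theorem WF.levelsFrom_subtreeAt (hwf : T.WF) (hc : c ∈ T.supp) (d : ℕ) :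
    (T.subtreeAt c).levelsFrom d = T.levelsFrom (d + T.depthOf c) ∩ T.descendants c := by
  ext z
  constructor
  · rintro ⟨hz, hd⟩
    have := hwf.depthOf_subtreeAt_add hc hz
    exact ⟨⟨hz.1, by omega⟩, hz⟩
  · rintro ⟨⟨-, hd⟩, hz⟩
    have := hwf.depthOf_subtreeAt_add hc hz
    exact ⟨hz, by omega⟩

def SubtreeIsComponent (T : RTree V) (G : SimpleGraph V) (v : V) : Prop :=
  ∀ w, w ∈ T.descendants v ↔
    w ∈ T.levelsFrom (T.depthOf v) ∧ reachWithin G (T.levelsFrom (T.depthOf v)) v w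

theorem SubtreeIsComponent.mem_of_adj (h : T.SubtreeIsComponent G v) (hx : x ∈ T.descendants v)
    (hy : y ∈ T.levelsFrom (T.depthOf v)) (hxy : G.Adj x y) : y ∈ T.descendants v := by
  obtain ⟨hxL, hvx⟩ := (h x).1 hx
  exact (h y).2 ⟨hy, hvx.tail ⟨hxL, hy, hxy⟩⟩

theorem SubtreeIsComponent.reachWithin_descendants (h : T.SubtreeIsComponent G v)
    (hv : v ∈ T.supp) (hw : w ∈ T.descendants v) : reachWithin G (T.descendants v) v w :=
  reachWithin_mono Set.inter_subset_right
    (reachWithin_inter_of_closed (fun _ _ hx hy => h.mem_of_adj hx hy) ⟨hv, .refl⟩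
      ((h w).1 hw).2).2

theorem WF.subtreeIsComponent_iff_of_parent_eq_root (hwf : T.WF)
    (hc : T.parent c = some T.root) :
    T.SubtreeIsComponent G c ↔ ∀ w, w ∈ T.descendants c ↔
      (w ∈ T.supp ∧ w ≠ T.root ∧ reachWithin G (T.supp \ {T.root}) c w) := by
  rw [SubtreeIsComponent, hwf.depthOf_parent hc, depthOf_root, zero_add, hwf.levelsFrom_one]
  simp only [Set.mem_sdiff, Set.mem_singleton_iff, and_assoc]

theorem WF.subtreeIsComponent_subtreeAt_iff (hwf : T.WF) (hc : c ∈ T.supp)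
    (hcomp : T.SubtreeIsComponent G c) (hv : v ∈ T.descendants c) :
    (T.subtreeAt c).SubtreeIsComponent G v ↔ T.SubtreeIsComponent G v := by
  have hdepth := hwf.depthOf_subtreeAt_add hc hv
  have hcl : ∀ x y, x ∈ T.descendants c → y ∈ T.levelsFrom (T.depthOf v) → G.Adj x y →
      y ∈ T.descendants c := fun _ _ hx hy => hcomp.mem_of_adj hx (levelsFrom_anti (by omega) hy)
  rw [SubtreeIsComponent, SubtreeIsComponent, hwf.descendants_subtreeAt hv,
    hwf.levelsFrom_subtreeAt hc, hdepth]
  refine forall_congr' fun w => iff_congr Iff.rfl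
    ⟨fun ⟨hw, h⟩ => ⟨hw.1, reachWithin_mono Set.inter_subset_left h⟩, fun ⟨hw, h⟩ => ?_⟩
  obtain ⟨hwc, h'⟩ := reachWithin_inter_of_closed hcl hv h
  exact ⟨⟨hw, hwc⟩, h'⟩

end RTree

section searchTree

variable {G : SimpleGraph V} {T : RTree V}

theorem IsSearchTreeRec.subtreeIsComponent (h : IsSearchTreeRec G T) {v : V} (hv : v ∈ T.supp)
    (hvr : v ≠ T.root) : T.SubtreeIsComponent G v := by
  induction h generalizing v with
  | intro T hwf _ hcomp _ ih =>
    obtain ⟨c, hc, hvc⟩ := hwf.exists_parent_eq_root_mem_descendants hv hvr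
    have hcomp' := (hwf.subtreeIsComponent_iff_of_parent_eq_root hc).2 (hcomp c hc)
    rcases eq_or_ne v c with rfl | hne
    · exact hcomp'
    · exact (hwf.subtreeIsComponent_subtreeAt_iff (hwf.mem_supp_of_parent_eq hc).1 hcomp' hvc).1
        (ih c hc hvc hne)

theorem isSearchTreeRec_of_subtreeIsComponent (hfin : T.supp.Finite) (hwf : T.WF)
    (hconn : ∀ a ∈ T.supp, ∀ b ∈ T.supp, reachWithin G T.supp a b)
    (hcomp : ∀ v ∈ T.supp, v ≠ T.root → T.SubtreeIsComponent G v) : IsSearchTreeRec G T := by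
  induction hn : T.supp.ncard using Nat.strong_induction_on generalizing T with
  | _ n ih =>
  have hcomp_child : ∀ c, T.parent c = some T.root → T.SubtreeIsComponent G c := fun c hc =>
    hcomp c (hwf.mem_supp_of_parent_eq hc).1 (hwf.mem_supp_of_parent_eq hc).2.2
  refine .intro T hwf hconn
    (fun c hc => (hwf.subtreeIsComponent_iff_of_parent_eq_root hc).1 (hcomp_child c hc))
    fun c hc => ?_
  obtain ⟨hcs, -, hcr⟩ := hwf.mem_supp_of_parent_eq hc
  have hsub : T.descendants c ⊂ T.supp := (Set.ssubset_iff_of_subset fun _ hz => hz.1).2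
    ⟨T.root, hwf.1, hwf.root_notMem_descendants hcr⟩
  refine ih _ (hn ▸ Set.ncard_lt_ncard hsub hfin) (hfin.subset hsub.subset) (hwf.subtreeAt hcs)
    (fun a ha b hb => ?_) (fun v hv hvc => ?_) rfl
  · exact (reachWithin_symm ((hcomp_child c hc).reachWithin_descendants hcs ha)).trans
      ((hcomp_child c hc).reachWithin_descendants hcs hb)
  · refine (hwf.subtreeIsComponent_subtreeAt_iff hcs (hcomp_child c hc) hv).2 ?_
    exact hcomp v hv.1 fun hvr => hwf.root_notMem_descendants hcr (hvr ▸ hv)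

end searchTree

/-- a rooted tree on `V(G)` is a search tree on `G` iff for every non-root
vertex `v` the subtree `T|v` induces a connected component of the graph obtained from `G`
by deleting all vertices of depth smaller than that of `v`. -/
theorem isSearchTree_iff_subtrees_components {V : Type u} [Fintype V] (G : SimpleGraph V)
    (hG : G.Connected) (T : RTree V) (hwf : T.WF) (hsupp : T.supp = Set.univ) :
    IsSearchTree G T ↔
      ∀ v : V, v ≠ T.root → ∀ w : V,
        w ∈ T.descendants v ↔
          (T.depthOf v ≤ T.depthOf w ∧
            reachWithin G {z | T.depthOf v ≤ T.depthOf z} v w) := by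
  have hlevels : ∀ d, T.levelsFrom d = {z | d ≤ T.depthOf z} := fun d => by
    simp [RTree.levelsFrom, hsupp]
  suffices IsSearchTree G T ↔ ∀ v ∈ T.supp, v ≠ T.root → T.SubtreeIsComponent G v by
    simpa [RTree.SubtreeIsComponent, hlevels, hsupp] using this
  refine ⟨fun ⟨_, h⟩ v hv hvr => h.subtreeIsComponent hv hvr, fun h => ⟨hsupp, ?_⟩⟩
  refine isSearchTreeRec_of_subtreeIsComponent (Set.toFinite _) hwf (fun a _ b _ => ?_) h
  rw [hsupp]
  exact reachWithin_univ_of_reachable (hG.preconnected a b)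
end
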